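/- arXiv:1608.00658 — 2 statements merged into one kernel-verified Lean document; each statement's English description precedes it below -/
import Mathlib

section
/- Let n be a finite nonempty index type, Q an n×n real matrix, q a positive real number, and P = I + q⁻¹ • Q (where I is the identity matrix). Then for every real t, the matrix exponential satisfies exp(t • Q) = e^{-q·t} • ∑_{k=0}^{∞} ((q·t)^k / k!) • P^k, where the series on the right converges (it equals e^{-q·t} · exp(q·t · P)). (This is the uniformisation identity underlying the transient analysis of continuous-time Markov chains.) -/
/-!
Since `P = 1 + q⁻¹ • Q`, we have `t • Q = -(q t) • 1 + (q t) • P`, a sum of commuting matrices, so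
`exp (t • Q) = e^{-q t} • exp ((q t) • P)`; and the Poisson-weighted series is term by term the
exponential series of `(q t) • P`.
-/

open NormedSpace

section BanachAlgebra

variable {𝕂 𝔸 : Type*} [RCLike 𝕂] [NormedRing 𝔸] [NormedAlgebra 𝕂 𝔸] [CompleteSpace 𝔸]

theorem exp_smul_one_add (c : 𝕂) (a : 𝔸) : exp (c • (1 : 𝔸) + a) = exp c • exp a := by
  have hball : ∀ x : 𝔸, x ∈ Metric.eball (0 : 𝔸) (expSeries 𝕂 𝔸).radius := fun x =>
    (expSeries_radius_eq_top 𝕂 𝔸).symm ▸ edist_lt_top _ _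
  have hc : exp (c • (1 : 𝔸)) = exp c • 1 := by
    rw [← Algebra.algebraMap_eq_smul_one, ← algebraMap_exp_comm, Algebra.algebraMap_eq_smul_one]
  rw [exp_add_of_commute_of_mem_ball ((Commute.one_left a).smul_left c) (hball _) (hball _), hc,
    smul_one_mul]

theorem hasSum_pow_div_factorial_smul_pow (s : 𝕂) (a : 𝔸) :
    HasSum (fun k : ℕ => (s ^ k / (k.factorial : 𝕂)) • a ^ k) (exp (s • a)) := by
  simpa only [smul_pow, smul_smul, div_eq_inv_mul] using exp_series_hasSum_exp' (𝕂 := 𝕂) (s • a)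

end BanachAlgebra

namespace Matrix

variable {𝕂 m : Type*} [RCLike 𝕂] [Fintype m] [DecidableEq m]

-- Matrices carry no global norm; `exp` depends only on the topology, which any matrix norm induces.
theorem exp_smul_one_add (c : 𝕂) (A : Matrix m m 𝕂) :
    exp (c • (1 : Matrix m m 𝕂) + A) = exp c • exp A :=
  open scoped Matrix.Norms.Operator in _root_.exp_smul_one_add c A

theorem hasSum_pow_div_factorial_smul_pow (s : 𝕂) (A : Matrix m m 𝕂) :
    HasSum (fun k : ℕ => (s ^ k / (k.factorial : 𝕂)) • A ^ k) (exp (s • A)) :=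
  open scoped Matrix.Norms.Operator in _root_.hasSum_pow_div_factorial_smul_pow s A

end Matrix

theorem smul_eq_neg_mul_smul_one_add_mul_smul_one_add_inv_smul {𝕂 A : Type*} [Field 𝕂] [Ring A]
    [Algebra 𝕂 A] {q : 𝕂} (hq : q ≠ 0) (t : 𝕂) (Q : A) :
    t • Q = (-(q * t)) • (1 : A) + (q * t) • (1 + q⁻¹ • Q) := by
  rw [smul_add, smul_smul, mul_right_comm, mul_inv_cancel₀ hq, one_mul, ← add_assoc, ← add_smul,
    neg_add_cancel, zero_smul, zero_add]

theorem uniformisation_identity_general {n : Type*} [Fintype n] [DecidableEq n]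
    (Q : Matrix n n ℝ) (q : ℝ) (hq : 0 < q)
    (P : Matrix n n ℝ) (hP : P = 1 + q⁻¹ • Q) (t : ℝ) :
    Summable (fun k : ℕ => ((q * t) ^ k / (k.factorial : ℝ)) • P ^ k) ∧
    exp (t • Q) =
      Real.exp (-(q * t)) • ∑' k : ℕ, ((q * t) ^ k / (k.factorial : ℝ)) • P ^ k ∧
    (∑' k : ℕ, ((q * t) ^ k / (k.factorial : ℝ)) • P ^ k) = exp ((q * t) • P) ∧
    exp (t • Q) = Real.exp (-(q * t)) • exp ((q * t) • P) := by
  have hsum := Matrix.hasSum_pow_div_factorial_smul_pow (q * t) P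
  have hexp : exp (t • Q) = Real.exp (-(q * t)) • exp ((q * t) • P) := by
    rw [smul_eq_neg_mul_smul_one_add_mul_smul_one_add_inv_smul hq.ne' t Q, ← hP,
      Matrix.exp_smul_one_add, Real.exp_eq_exp_ℝ]
  exact ⟨hsum.summable, by rw [hsum.tsum_eq, hexp], hsum.tsum_eq, hexp⟩

/-- Uniformisation identity: for a CTMC generator `Q`, uniformisation rate `q > 0` and
uniformised matrix `P = I + q⁻¹ • Q`, we have
`exp (t • Q) = e^{-q t} • ∑ₖ ((q t)^k / k!) • P^k`, where the series converges
(indeed it equals `exp ((q t) • P)`, so that `exp (t • Q) = e^{-q t} • exp ((q t) • P)`). -/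
theorem uniformisation_identity {n : Type*} [Fintype n] [Nonempty n] [DecidableEq n]
    (Q : Matrix n n ℝ) (q : ℝ) (hq : 0 < q)
    (P : Matrix n n ℝ) (hP : P = 1 + q⁻¹ • Q) (t : ℝ) :
    Summable (fun k : ℕ => ((q * t) ^ k / (k.factorial : ℝ)) • P ^ k) ∧
    exp (t • Q) =
      Real.exp (-(q * t)) • ∑' k : ℕ, ((q * t) ^ k / (k.factorial : ℝ)) • P ^ k ∧
    (∑' k : ℕ, ((q * t) ^ k / (k.factorial : ℝ)) • P ^ k) = exp ((q * t) • P) ∧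
    exp (t • Q) = Real.exp (-(q * t)) • exp ((q * t) • P) :=
  uniformisation_identity_general Q q hq P hP t
end

section
/- Let n be a finite nonempty index type and Q an n×n real matrix with nonnegative off-diagonal entries, i.e. Q i j ≥ 0 whenever i ≠ j. Then for every real t ≥ 0, all entries of exp(t • Q) are nonnegative: (exp(t • Q)) i j ≥ 0 for all i, j. (Transient probabilities of a CTMC are nonnegative; this follows from the uniformisation representation, choosing the uniformisation rate q at least as large as every diagonal magnitude so that P = I + q⁻¹Q is entrywise nonnegative.) -/
/-!
Shifting `A` by a multiple of the identity only rescales its exponential: since `c • 1` is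
central, `exp A = exp (-c) • exp (A + c • 1)`. If the off-diagonal entries of `A` are
nonnegative, a large enough `c` makes `A + c • 1` entrywise nonnegative, and then so are all its
powers and hence every term of its exponential series.
-/

open NormedSpace

-- Any normed algebra structure gives the same `exp`; this one just makes the series lemmas apply.
attribute [local instance] Matrix.linftyOpNormedRing Matrix.linftyOpNormedAlgebra

namespace Matrix

variable {n : Type*} [Fintype n] [DecidableEq n]

theorem exp_apply_nonneg {B : Matrix n n ℝ} (hB : ∀ i j, 0 ≤ B i j) (i j : n) :
    0 ≤ exp B i j := by
  have hsum : HasSum (fun k => ((k.factorial : ℝ)⁻¹ • B ^ k) i j) (exp B i j) :=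
    Pi.hasSum.mp (Pi.hasSum.mp (exp_series_hasSum_exp' (𝕂 := ℝ) B) i) j
  refine hsum.nonneg fun k => ?_
  rw [smul_apply, smul_eq_mul]
  exact mul_nonneg (by positivity) (pow_apply_nonneg hB k i j)

theorem exp_smul_one (r : ℝ) : exp (r • (1 : Matrix n n ℝ)) = Real.exp r • 1 := by
  have h := algebraMap_exp_comm (𝔸 := Matrix n n ℝ) r
  rw [Algebra.algebraMap_eq_smul_one, Algebra.algebraMap_eq_smul_one, ← Real.exp_eq_exp_ℝ] at h
  exact h.symm

theorem exp_eq_exp_neg_smul_exp_add_smul_one (A : Matrix n n ℝ) (c : ℝ) :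
    exp A = Real.exp (-c) • exp (A + c • 1) := by
  have hA : A = (A + c • 1) + (-c) • (1 : Matrix n n ℝ) := by module
  conv_lhs => rw [hA]
  rw [exp_add_of_commute _ _ ((Commute.one_right _).smul_right _), exp_smul_one, mul_smul_comm,
    mul_one]

theorem exists_add_smul_one_apply_nonneg {A : Matrix n n ℝ} (hA : ∀ i j, i ≠ j → 0 ≤ A i j) :
    ∃ c : ℝ, ∀ i j, 0 ≤ (A + c • 1) i j := by
  refine ⟨∑ k, |A k k|, fun i j => ?_⟩
  rw [add_apply, smul_apply, one_apply, smul_eq_mul]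
  split_ifs with hij
  · subst hij
    have hdiag : |A i i| ≤ ∑ k, |A k k| :=
      Finset.single_le_sum (f := fun k => |A k k|) (fun k _ => abs_nonneg _) (Finset.mem_univ i)
    linarith [neg_abs_le (A i i)]
  · simpa using hA i j hij

end Matrix

theorem exp_entries_nonneg_general {n : Type*} [Fintype n] [DecidableEq n]
    (Q : Matrix n n ℝ) (hQ : ∀ i j, i ≠ j → 0 ≤ Q i j) (t : ℝ) (ht : 0 ≤ t) :
    ∀ i j, 0 ≤ (NormedSpace.exp (t • Q)) i j := by
  have htQ : ∀ i j, i ≠ j → 0 ≤ (t • Q) i j := fun i j hij => mul_nonneg ht (hQ i j hij)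
  obtain ⟨c, hc⟩ := Matrix.exists_add_smul_one_apply_nonneg htQ
  intro i j
  rw [Matrix.exp_eq_exp_neg_smul_exp_add_smul_one _ c, Matrix.smul_apply, smul_eq_mul]
  exact mul_nonneg (Real.exp_pos _).le (Matrix.exp_apply_nonneg hc i j)

/-- If the off-diagonal entries of `Q` are nonnegative, then for every `t ≥ 0` all the
entries of `exp (t • Q)` are nonnegative. -/
theorem exp_entries_nonneg {n : Type*} [Fintype n] [Nonempty n] [DecidableEq n]
    (Q : Matrix n n ℝ) (hQ : ∀ i j, i ≠ j → 0 ≤ Q i j) (t : ℝ) (ht : 0 ≤ t) :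
    ∀ i j, 0 ≤ (NormedSpace.exp (t • Q)) i j :=
  exp_entries_nonneg_general Q hQ t ht
end
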